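/- arXiv:1204.0250 — 4 statements merged into one kernel-verified Lean document; each statement's English description precedes it below -/
import Mathlib

section
/- For any product M of matrices from {C₁ = [[1,0],[1,1]], C₂ = [[1,1],[0,1]]} (with at least one factor), writing M = [[a,b],[c,d]], the interval d_M = ψ_M((0,1)) obtained by applying the induced Möbius map ψ_M(φ) = ((a-c)φ + c)/((a+b-c-d)φ + c+d) to (0,1) has length |d_M| = 1/((a+b)(c+d)), and 1/(4‖M‖²) ≤ |d_M| ≤ 1/‖M‖, where ‖M‖ = max{a,b,c,d}. -/
/-- `C₁ = [[1,0],[1,1]]`, `C₂ = [[1,1],[0,1]]`. -/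
def Cmat : Fin 2 → Matrix (Fin 2) (Fin 2) ℕ := ![!![1,0;1,1], !![1,1;0,1]]

lemma diag_ge (l : List (Fin 2)) :
    1 ≤ (l.map Cmat).prod 0 0 ∧ 1 ≤ (l.map Cmat).prod 1 1 := by
  induction l with
  | nil => simp
  | cons x l ih =>
    obtain ⟨h1, h2⟩ := ih
    simp only [List.map_cons, List.prod_cons]
    generalize (l.map Cmat).prod = P at h1 h2 ⊢
    fin_cases x <;>
      simp [Cmat, Matrix.mul_apply, Fin.sum_univ_two] <;> omega

lemma det_one (l : List (Fin 2)) :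
    (l.map Cmat).prod 0 0 * (l.map Cmat).prod 1 1
      = (l.map Cmat).prod 0 1 * (l.map Cmat).prod 1 0 + 1 := by
  induction l with
  | nil => simp
  | cons x l ih =>
    simp only [List.map_cons, List.prod_cons]
    generalize (l.map Cmat).prod = P at ih ⊢
    fin_cases x <;>
      simp [Cmat, Matrix.mul_apply, Fin.sum_univ_two] <;> linarith [ih]

/-- For any nonempty product `M = [[a,b],[c,d]]` of `C₁`, `C₂`, the interval
`ψ_M((0,1))` (with endpoints `a/(a+b)` and `c/(c+d)`) has length `1/((a+b)(c+d))`,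
and `1/(4‖M‖²) ≤ |d_M| ≤ 1/‖M‖` where `‖M‖ = max{a,b,c,d}`. -/
theorem stmt7 (l : List (Fin 2)) (hl : l ≠ [])
    (M : Matrix (Fin 2) (Fin 2) ℕ) (hM : M = (l.map Cmat).prod) :
    let a : ℝ := M 0 0; let b : ℝ := M 0 1; let c : ℝ := M 1 0; let d : ℝ := M 1 1
    let N : ℝ := ((max (max (M 0 0) (M 0 1)) (max (M 1 0) (M 1 1)) : ℕ) : ℝ)
    |c / (c + d) - a / (a + b)| = 1 / ((a + b) * (c + d)) ∧
    1 / (4 * N ^ 2) ≤ 1 / ((a + b) * (c + d)) ∧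
    1 / ((a + b) * (c + d)) ≤ 1 / N := by
  intro a b c d N
  obtain ⟨hA, hD⟩ := diag_ge l
  have hdet := det_one l
  rw [← hM] at hA hD hdet
  have ha : (1:ℝ) ≤ a := by
    show (1:ℝ) ≤ ((M 0 0 : ℕ) : ℝ); exact_mod_cast hA
  have hd : (1:ℝ) ≤ d := by
    show (1:ℝ) ≤ ((M 1 1 : ℕ) : ℝ); exact_mod_cast hD
  have hb : (0:ℝ) ≤ b := Nat.cast_nonneg _
  have hc : (0:ℝ) ≤ c := Nat.cast_nonneg _
  have hdetR : a * d = b * c + 1 := by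
    show ((M 0 0 : ℕ) : ℝ) * ((M 1 1 : ℕ) : ℝ) = ((M 0 1 : ℕ) : ℝ) * ((M 1 0 : ℕ) : ℝ) + 1
    exact_mod_cast hdet
  have hab : (0:ℝ) < a + b := by linarith
  have hcd : (0:ℝ) < c + d := by linarith
  have hNa : a ≤ N := Nat.cast_le.mpr (le_max_of_le_left (le_max_left _ _))
  have hNb : b ≤ N := Nat.cast_le.mpr (le_max_of_le_left (le_max_right _ _))
  have hNc : c ≤ N := Nat.cast_le.mpr (le_max_of_le_right (le_max_left _ _))
  have hNd : d ≤ N := Nat.cast_le.mpr (le_max_of_le_right (le_max_right _ _))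
  have hN1 : (1:ℝ) ≤ N := le_trans ha hNa
  have hNle : N ≤ (a + b) * (c + d) := by
    have h1 : a + b ≤ (a + b) * (c + d) := le_mul_of_one_le_right (le_of_lt hab) (by linarith)
    have h2 : c + d ≤ (a + b) * (c + d) := le_mul_of_one_le_left (le_of_lt hcd) (by linarith)
    have hmax : N ≤ max (a + b) (c + d) := by
      show ((max (max (M 0 0) (M 0 1)) (max (M 1 0) (M 1 1)) : ℕ) : ℝ) ≤ _
      push_cast [Nat.cast_max]
      simp only [max_le_iff]
      refine ⟨⟨?_, ?_⟩, ?_, ?_⟩ <;>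
        [exact le_max_of_le_left (by linarith); exact le_max_of_le_left (by linarith);
         exact le_max_of_le_right (by linarith); exact le_max_of_le_right (by linarith)]
    rcases max_le_iff.mp (le_refl (max (a+b) (c+d))) with ⟨-, -⟩
    rcases le_max_iff.mp hmax with h | h <;> linarith
  refine ⟨?_, ?_, ?_⟩
  · have key : c / (c + d) - a / (a + b) = -(1 / ((a + b) * (c + d))) := by
      field_simp
      nlinarith [hdetR]
    rw [key, abs_neg, abs_of_pos (by positivity)]
  · apply one_div_le_one_div_of_le (by positivity)
    nlinarith
  · exact one_div_le_one_div_of_le (by linarith) hNle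
end

section
/- Define S^ℂ_i = (1/√2)·[[1, ε_i],[0,2]] for i = 1,2,3 with ε₁ = i (imaginary unit), ε₂ = 1, ε₃ = -1. Then, in the norm given by the largest modulus of the entries, for every word I of length p, ‖S^ℂ_I‖ = 2^{p/2}. -/
/-- `S^ℂ_i = (1/√2)·[[1, εᵢ],[0,2]]` with `ε₁ = i`, `ε₂ = 1`, `ε₃ = -1`. -/
noncomputable def Scplx : Fin 3 → Matrix (Fin 2) (Fin 2) ℂ :=
  fun i => ((Real.sqrt 2 : ℂ))⁻¹ • !![1, ![Complex.I, 1, -1] i; 0, 2]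

lemma key (l : List (Fin 3)) : ∃ c : ℂ, ‖c‖ ≤ 2 ^ l.length - 1 ∧
    (l.map Scplx).prod =
      ((Real.sqrt 2 : ℂ))⁻¹ ^ l.length • !![1, c; 0, 2 ^ l.length] := by
  induction l with
  | nil =>
    refine ⟨0, by norm_num, ?_⟩
    simp [Matrix.one_fin_two]
  | cons i t ih =>
    obtain ⟨c, hc, hprod⟩ := ih
    have hε : ‖(![Complex.I, 1, -1] i)‖ = 1 := by fin_cases i <;> simp
    refine ⟨c + (![Complex.I, 1, -1] i) * 2 ^ t.length, ?_, ?_⟩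
    · calc ‖c + (![Complex.I, 1, -1] i) * 2 ^ t.length‖
          ≤ ‖c‖ + ‖(![Complex.I, 1, -1] i) * 2 ^ t.length‖ := norm_add_le _ _
        _ ≤ (2 ^ t.length - 1) + 2 ^ t.length := by
            rw [norm_mul, hε, one_mul]
            gcongr
            simp
          _ ≤ 2 ^ (i :: t).length - 1 := by
            simp [pow_succ]; ring_nf; norm_num
    · simp only [List.map_cons, List.prod_cons, hprod, Scplx, List.length_cons,
        Matrix.smul_mul, Matrix.mul_smul, smul_smul, pow_succ]
      rw [show !![1, ![Complex.I, 1, -1] i; 0, 2] * !![1, c; 0, (2:ℂ) ^ t.length]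
          = !![1, c + (![Complex.I, 1, -1] i) * 2 ^ t.length; 0, 2 ^ (t.length + 1)] by
        rw [Matrix.mul_fin_two]; congr 1 <;> ring]
      ring_nf

/-- Every product of `p ≥ 1` of the matrices `S^ℂ_i` has norm `2^{p/2}` in the norm given by the
largest modulus of the entries. -/
theorem stmt14 (l : List (Fin 3)) (hl : l ≠ []) :
    max (max ‖((l.map Scplx).prod) 0 0‖ ‖((l.map Scplx).prod) 0 1‖)
        (max ‖((l.map Scplx).prod) 1 0‖ ‖((l.map Scplx).prod) 1 1‖)
      = (2 : ℝ) ^ ((l.length : ℝ) / 2) := by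
  obtain ⟨c, hc, hprod⟩ := key l
  set p := l.length
  set r := Real.sqrt 2 with hr
  have hr0 : 0 < r := Real.sqrt_pos.mpr (by norm_num)
  have hr2 : r * r = 2 := Real.mul_self_sqrt (by norm_num)
  have hr1 : 1 ≤ r := by nlinarith
  have hnorm : ‖((r : ℂ))⁻¹ ^ p‖ = r⁻¹ ^ p := by
    rw [norm_pow, norm_inv, Complex.norm_real, Real.norm_eq_abs, abs_of_pos hr0]
  have hrpow : (2 : ℝ) ^ ((p : ℝ) / 2) = r ^ p := by
    rw [hr, Real.sqrt_eq_rpow, ← Real.rpow_natCast (2 ^ ((1:ℝ)/2)) p,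
      ← Real.rpow_mul (by norm_num)]
    ring_nf
  have hentries : ∀ a b, ((l.map Scplx).prod) a b =
      ((r : ℂ))⁻¹ ^ p * (!![1, c; 0, (2:ℂ) ^ p] a b) := by
    intro a b; rw [hprod]; simp
  have hkey : r⁻¹ ^ p * 2 ^ p = r ^ p := by
    rw [← mul_pow]
    congr 1
    field_simp
    linarith [hr2]
  rw [hrpow]
  have e00 : ‖((l.map Scplx).prod) 0 0‖ = r⁻¹ ^ p := by
    rw [hentries]; simp [norm_mul, hnorm, abs_of_pos hr0]
  have e01 : ‖((l.map Scplx).prod) 0 1‖ = r⁻¹ ^ p * ‖c‖ := by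
    rw [hentries, norm_mul, hnorm]; simp
  have e10 : ‖((l.map Scplx).prod) 1 0‖ = 0 := by
    rw [hentries]; simp
  have e11 : ‖((l.map Scplx).prod) 1 1‖ = r ^ p := by
    rw [hentries, norm_mul, hnorm, ← hkey]
    congr 1
    rw [show !![1, c; 0, (2:ℂ) ^ p] 1 1 = (2:ℂ) ^ p by simp, norm_pow]
    norm_num
  rw [e00, e01, e10, e11]
  have hri : r * r⁻¹ = 1 := mul_inv_cancel₀ (ne_of_gt hr0)
  have hrr : r⁻¹ ≤ r := by nlinarith
  have h1 : r⁻¹ ^ p ≤ r ^ p := pow_le_pow_left₀ (by positivity) hrr p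
  have h2 : r⁻¹ ^ p * ‖c‖ ≤ r ^ p := by
    calc r⁻¹ ^ p * ‖c‖ ≤ r⁻¹ ^ p * (2 ^ p) := by
          have := norm_nonneg c
          gcongr
          linarith
      _ = r ^ p := hkey
  have hb : (0:ℝ) ≤ r ^ p := by positivity
  rw [max_eq_right hb, max_eq_right (max_le h1 h2)]
end

section
/- For the Hirst matrices H₁, H₂, H₃ (4×4 nonnegative integer matrices given by H₁ = [[1,0,0,0],[0,1,0,0],[1,1,1,2],[1,1,0,1]], H₂ = [[1,0,0,0],[0,0,1,0],[1,1,1,2],[1,0,1,1]], H₃ = [[0,1,0,0],[0,0,1,0],[1,1,1,2],[0,1,1,1]]), in every finite product of these matrices, each entry of the third row is greater than or equal to every other entry in its column. -/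
/-- The Hirst matrices `H₁, H₂, H₃`. -/
def Hmat : Fin 3 → Matrix (Fin 4) (Fin 4) ℕ :=
  ![!![1,0,0,0;0,1,0,0;1,1,1,2;1,1,0,1],
    !![1,0,0,0;0,0,1,0;1,1,1,2;1,0,1,1],
    !![0,1,0,0;0,0,1,0;1,1,1,2;0,1,1,1]]

/-! Only the first factor matters: right multiplication by a matrix with nonnegative entries
preserves the domination of one row over another, and every `H_k` has its third row dominating. -/

theorem Matrix.mul_apply_le_mul_apply_of_row_le {m n o α : Type*} [Fintype n] [Semiring α]
    [PartialOrder α] [IsOrderedRing α] {A : Matrix m n α} {B : Matrix n o α} {i r : m} {j : o}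
    (hB : ∀ k, 0 ≤ B k j) (hA : ∀ k, A i k ≤ A r k) : (A * B) i j ≤ (A * B) r j := by
  simp only [Matrix.mul_apply]
  exact Finset.sum_le_sum fun k _ => mul_le_mul_of_nonneg_right (hA k) (hB k)

theorem Hmat_apply_le_Hmat_two (k : Fin 3) (i j : Fin 4) : Hmat k i j ≤ Hmat k 2 j := by
  fin_cases k <;> fin_cases i <;> fin_cases j <;> decide

/-- In every nonempty product of Hirst matrices, each entry of the third row is greater than or
equal to every other entry in its column. -/
theorem stmt18 (l : List (Fin 3)) (hl : l ≠ []) :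
    ∀ i j : Fin 4, ((l.map Hmat).prod) i j ≤ ((l.map Hmat).prod) 2 j := by
  obtain ⟨a, t, rfl⟩ := List.exists_cons_of_ne_nil hl
  intro i j
  rw [List.map_cons, List.prod_cons]
  exact Matrix.mul_apply_le_mul_apply_of_row_le (fun _ => Nat.zero_le _)
    (fun k => Hmat_apply_le_Hmat_two a i k)
end

section
/- Let A₁ = [[α,λ,μ],[0,β,ν],[0,0,1]] be an upper triangular matrix arising as a product of the affine-Sierpinski generator matrices M₁ = [[1-a,0,0],[0,1-a,a],[0,0,1]], M₂ = [[b,0,0],[0,a,0],[0,0,1]], M₃ = [[1-b,1-a-b,b],[0,a,0],[0,0,1]] with 0 < a < 1, 0 < b < 1, a + b ≤ 1. Then every such product satisfies 0 ≤ λ + β ≤ 1 and 0 ≤ μ + ν ≤ 1; in particular all entries lie in [0,1] and the max norm of every product equals 1. -/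
set_option maxHeartbeats 1000000

private def SInv (P : Matrix (Fin 3) (Fin 3) ℝ) : Prop :=
  P 1 0 = 0 ∧ P 2 0 = 0 ∧ P 2 1 = 0 ∧ P 2 2 = 1 ∧
  0 ≤ P 0 0 ∧ P 0 0 ≤ 1 ∧ 0 ≤ P 0 1 ∧ 0 ≤ P 1 1 ∧ P 0 1 + P 1 1 ≤ 1 ∧
  0 ≤ P 0 2 ∧ 0 ≤ P 1 2 ∧ P 0 2 + P 1 2 ≤ 1

private lemma step1 (a b : ℝ) (ha0 : 0 < a) (ha1 : a < 1) (hb0 : 0 < b) (hb1 : b < 1)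
    (hab : a + b ≤ 1) (P : Matrix (Fin 3) (Fin 3) ℝ) (h : SInv P) :
    SInv (!![1-a,0,0;0,1-a,a;0,0,1] * P) := by
  obtain ⟨h10, h20, h21, h22, h00a, h00b, h01, h11, hs1, h02, h12, hs2⟩ := h
  refine ⟨?_, ?_, ?_, ?_, ?_, ?_, ?_, ?_, ?_, ?_, ?_, ?_⟩ <;>
    · simp [Matrix.mul_apply, Fin.sum_univ_three, h10, h20, h21, h22] <;>
      nlinarith [mul_nonneg ha0.le h11, mul_nonneg ha0.le h01, mul_nonneg ha0.le h12,
        mul_nonneg ha0.le h02, mul_nonneg ha0.le h00a]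

private lemma step2 (a b : ℝ) (ha0 : 0 < a) (ha1 : a < 1) (hb0 : 0 < b) (hb1 : b < 1)
    (hab : a + b ≤ 1) (P : Matrix (Fin 3) (Fin 3) ℝ) (h : SInv P) :
    SInv (!![b,0,0;0,a,0;0,0,1] * P) := by
  obtain ⟨h10, h20, h21, h22, h00a, h00b, h01, h11, hs1, h02, h12, hs2⟩ := h
  refine ⟨?_, ?_, ?_, ?_, ?_, ?_, ?_, ?_, ?_, ?_, ?_, ?_⟩ <;>
    · simp [Matrix.mul_apply, Fin.sum_univ_three, h10, h20, h21, h22] <;>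
      nlinarith [mul_nonneg ha0.le h11, mul_nonneg hb0.le h01, mul_nonneg ha0.le h12,
        mul_nonneg hb0.le h02, mul_nonneg hb0.le h00a]

private lemma step3 (a b : ℝ) (ha0 : 0 < a) (ha1 : a < 1) (hb0 : 0 < b) (hb1 : b < 1)
    (hab : a + b ≤ 1) (P : Matrix (Fin 3) (Fin 3) ℝ) (h : SInv P) :
    SInv (!![1-b,1-a-b,b;0,a,0;0,0,1] * P) := by
  obtain ⟨h10, h20, h21, h22, h00a, h00b, h01, h11, hs1, h02, h12, hs2⟩ := h
  refine ⟨?_, ?_, ?_, ?_, ?_, ?_, ?_, ?_, ?_, ?_, ?_, ?_⟩ <;>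
    · simp [Matrix.mul_apply, Fin.sum_univ_three, h10, h20, h21, h22] <;>
      nlinarith [mul_nonneg ha0.le h11, mul_nonneg hb0.le h01, mul_nonneg ha0.le h12,
        mul_nonneg hb0.le h02, mul_nonneg hb0.le h00a, mul_nonneg ha0.le hb0.le,
        mul_nonneg hb0.le h11, mul_nonneg hb0.le h12,
        mul_nonneg (by linarith : (0:ℝ) ≤ 1 - a - b) h11,
        mul_nonneg (by linarith : (0:ℝ) ≤ 1 - a - b) h12]

/-- For the affine-Sierpinski generator matrices with `0 < a,b < 1`, `a + b ≤ 1`, every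
finite product `P = [[α,λ,μ],[0,β,ν],[0,0,1]]` satisfies `0 ≤ λ + β ≤ 1`, `0 ≤ μ + ν ≤ 1`;
in particular all entries lie in `[0,1]` and the max norm of every product equals `1`. -/
theorem stmt19 (a b : ℝ) (ha : 0 < a ∧ a < 1) (hb : 0 < b ∧ b < 1) (hab : a + b ≤ 1)
    (M : Fin 3 → Matrix (Fin 3) (Fin 3) ℝ)
    (hM : M = ![!![1-a,0,0;0,1-a,a;0,0,1],
                !![b,0,0;0,a,0;0,0,1],
                !![1-b,1-a-b,b;0,a,0;0,0,1]]) :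
    ∀ l : List (Fin 3),
      (0 ≤ ((l.map M).prod) 0 1 + ((l.map M).prod) 1 1 ∧
        ((l.map M).prod) 0 1 + ((l.map M).prod) 1 1 ≤ 1) ∧
      (0 ≤ ((l.map M).prod) 0 2 + ((l.map M).prod) 1 2 ∧
        ((l.map M).prod) 0 2 + ((l.map M).prod) 1 2 ≤ 1) ∧
      (∀ i j, 0 ≤ ((l.map M).prod) i j ∧ ((l.map M).prod) i j ≤ 1) ∧
      (⨆ i, ⨆ j, |((l.map M).prod) i j|) = 1 := by
  obtain ⟨ha0, ha1⟩ := ha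
  obtain ⟨hb0, hb1⟩ := hb
  have key : ∀ l : List (Fin 3), SInv ((l.map M).prod) := by
    intro l
    induction l with
    | nil =>
      simp only [List.map_nil, List.prod_nil]
      refine ⟨?_, ?_, ?_, ?_, ?_, ?_, ?_, ?_, ?_, ?_, ?_, ?_⟩ <;>
        simp [Matrix.one_apply]
    | cons x t ih =>
      rw [List.map_cons, List.prod_cons]
      have hMx : M x = !![1-a,0,0;0,1-a,a;0,0,1] ∨ M x = !![b,0,0;0,a,0;0,0,1] ∨
          M x = !![1-b,1-a-b,b;0,a,0;0,0,1] := by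
        fin_cases x <;> simp [hM]
      rcases hMx with h | h | h <;> rw [h]
      · exact step1 a b ha0 ha1 hb0 hb1 hab _ ih
      · exact step2 a b ha0 ha1 hb0 hb1 hab _ ih
      · exact step3 a b ha0 ha1 hb0 hb1 hab _ ih
  intro l
  obtain ⟨h10, h20, h21, h22, h00a, h00b, h01, h11, hs1, h02, h12, hs2⟩ := key l
  set P := ((l.map M).prod) with hP
  have tri : ∀ i : Fin 3, i = 0 ∨ i = 1 ∨ i = 2 := by decide
  have hub : ∀ i j, 0 ≤ P i j ∧ P i j ≤ 1 := by
    intro i j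
    rcases tri i with rfl | rfl | rfl <;> rcases tri j with rfl | rfl | rfl <;>
      exact ⟨by linarith, by linarith⟩
  refine ⟨⟨by linarith, hs1⟩, ⟨by linarith, hs2⟩, hub, ?_⟩
  apply le_antisymm
  · exact ciSup_le fun i => ciSup_le fun j => abs_le.mpr ⟨by linarith [(hub i j).1], (hub i j).2⟩
  · have h1 : |P 2 2| ≤ ⨆ j, |P 2 j| :=
      le_ciSup (f := fun j : Fin 3 => |P 2 j|) (Set.Finite.bddAbove (Set.finite_range _)) 2
    have h2 : (⨆ j, |P 2 j|) ≤ ⨆ i, ⨆ j, |P i j| :=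
      le_ciSup (f := fun i : Fin 3 => ⨆ j, |P i j|) (Set.Finite.bddAbove (Set.finite_range _)) 2
    calc (1:ℝ) = |P 2 2| := by rw [h22]; simp
    _ ≤ _ := le_trans h1 h2
end
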